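/- arXiv:2010.06861 — 5 statements merged into one kernel-verified Lean document; each statement's English description precedes it below -/
import Mathlib

section
/- Let A : [0,∞) → M_d(ℝ) be continuous, let A* ∈ M_d(ℝ), and let Ψ(·,s) be the principal matrix solution of Ẏ(t) = A(t)Y(t) with Ψ(s,s) = I_d. Assume there are constants ρ > 0, Γ₁ ≥ 1, Γ₂ ≥ 1 and L ≥ 0 such that: ‖exp(uA*)‖ ≤ Γ₂·e^{−ρu/2} for all u ≥ 0; ‖Ψ(t,s)‖ ≤ Γ₂·e^{−ρ(t−s)/2} for all t ≥ s ≥ 0; and ‖A(r) − A*‖ ≤ L·Γ₁·e^{−ρr/2} for all r ≥ 0. Then for all t ≥ u ≥ 0: ‖Ψ(t, t−u) − exp(uA*)‖ ≤ 2ρ⁻¹·Γ₁·Γ₂²·L·e^{−ρ(t−u)/2}. In particular, for each fixed u ≥ 0, Ψ(t, t−u) → exp(uA*) as t → ∞. -/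
/-!
Conjugating the solution by the limiting flow, `r ↦ exp((t - r)A*) Ψ(r, s)` runs from
`exp((t - s)A*)` at `r = s` to `Ψ(t, s)` at `r = t`, and its derivative is
`exp((t - r)A*) (A(r) - A*) Ψ(r, s)` (variation of constants). The three exponential bounds make this derivative at most
`Γ₁Γ₂²L e^{-ρ(t - s)/2} e^{-ρr/2}`, whose integral over `[s, ∞)` is `2ρ⁻¹Γ₁Γ₂²L e^{-ρt/2}`;
the mean value inequality turns this into the bound on `‖Ψ(t, s) - exp((t - s)A*)‖`.
-/

open Set Filter Topology NormedSpace

theorem hasDerivAt_exp_mul_div {c : ℝ} (hc : c ≠ 0) (r : ℝ) :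
    HasDerivAt (fun r => Real.exp (c * r) / c) (Real.exp (c * r)) r := by
  refine (((hasDerivAt_id r).const_mul c).exp.div_const c).congr_deriv ?_
  simp only [id, mul_one]
  field_simp

theorem tendsto_mul_exp_neg_mul_sub_div_two {ρ : ℝ} (hρ : 0 < ρ) (C u : ℝ) :
    Tendsto (fun t => C * Real.exp (-ρ * (t - u) / 2)) atTop (𝓝 0) := by
  have hexponent : Tendsto (fun t => -ρ * (t - u) / 2) atTop atBot :=
    ((tendsto_atTop_add_const_right _ _ tendsto_id).const_mul_atTop_of_neg
      (neg_neg_iff_pos.2 hρ)).atBot_div_const two_pos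
  simpa using (Real.tendsto_exp_atBot.comp hexponent).const_mul C

section VariationOfConstants

variable {𝔸 : Type*} [NormedRing 𝔸] [NormedAlgebra ℝ 𝔸] [CompleteSpace 𝔸]

theorem hasDerivAt_exp_sub_smul_mul {a Y' : 𝔸} {Y : ℝ → 𝔸} {t r : ℝ} (hY : HasDerivAt Y Y' r) :
    HasDerivAt (fun r => exp ((t - r) • a) * Y r) (exp ((t - r) • a) * (Y' - a * Y r)) r := by
  have hexp : HasDerivAt (fun r : ℝ => exp ((t - r) • a)) (-(exp ((t - r) • a) * a)) r := by
    simpa [Function.comp_def] using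
      (hasDerivAt_exp_smul_const (𝕂 := ℝ) a (t - r)).scomp r ((hasDerivAt_id r).const_sub t)
  refine (hexp.mul hY).congr_deriv ?_
  rw [mul_sub, neg_mul, mul_assoc]
  abel

theorem norm_sub_exp_smul_mul_le {a : 𝔸} {A Y : ℝ → 𝔸} {B B' : ℝ → ℝ} {s t : ℝ} (hst : s ≤ t)
    (hY : ∀ r ∈ Icc s t, HasDerivAt Y (A r * Y r) r) (hB : ∀ r, HasDerivAt B (B' r) r)
    (hbound : ∀ r ∈ Ico s t, ‖exp ((t - r) • a) * ((A r - a) * Y r)‖ ≤ B' r) :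
    ‖Y t - exp ((t - s) • a) * Y s‖ ≤ B t - B s := by
  have hderiv : ∀ r ∈ Icc s t,
      HasDerivAt (fun r => exp ((t - r) • a) * Y r - exp ((t - s) • a) * Y s)
        (exp ((t - r) • a) * ((A r - a) * Y r)) r := fun r hr => by
    simpa only [sub_mul] using
      (hasDerivAt_exp_sub_smul_mul (t := t) (a := a) (hY r hr)).sub_const _
  have hfence := image_norm_le_of_norm_deriv_right_le_deriv_boundary
    (fun r hr => (hderiv r hr).continuousAt.continuousWithinAt)
    (fun r hr => (hderiv r (Ico_subset_Icc_self hr)).hasDerivWithinAt)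
    (B := fun r => B r - B s) (by simp) (fun r => (hB r).sub_const _) hbound ⟨hst, le_rfl⟩
  simpa using hfence

theorem norm_sub_exp_smul_le_of_decay {a : 𝔸} {A Y : ℝ → 𝔸} {s t c C : ℝ} (hc : 0 < c)
    (hC : 0 ≤ C) (hst : s ≤ t) (hY : ∀ r ∈ Icc s t, HasDerivAt Y (A r * Y r) r) (hYs : Y s = 1)
    (hbound : ∀ r ∈ Ico s t, ‖exp ((t - r) • a) * ((A r - a) * Y r)‖ ≤ C * Real.exp (-c * r)) :
    ‖Y t - exp ((t - s) • a)‖ ≤ C / c * Real.exp (-c * s) := by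
  have h := norm_sub_exp_smul_mul_le hst hY
    (fun r => (hasDerivAt_exp_mul_div (neg_ne_zero.2 hc.ne') r).const_mul C) hbound
  rw [hYs, mul_one] at h
  have htail : 0 ≤ C / c * Real.exp (-c * t) := by positivity
  calc _ ≤ _ := h
    _ = C / c * Real.exp (-c * s) - C / c * Real.exp (-c * t) := by
      field_simp
      ring
    _ ≤ C / c * Real.exp (-c * s) := by linarith

end VariationOfConstants

theorem norm_mul_mul_le_of_le {𝔸 : Type*} [NonUnitalSeminormedRing 𝔸] {x y z : 𝔸} {X Y Z : ℝ}
    (hx : ‖x‖ ≤ X) (hy : ‖y‖ ≤ Y) (hz : ‖z‖ ≤ Z) : ‖x * (y * z)‖ ≤ X * (Y * Z) :=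
  calc ‖x * (y * z)‖ ≤ ‖x‖ * (‖y‖ * ‖z‖) :=
        (norm_mul_le _ _).trans (by gcongr; exact norm_mul_le _ _)
    _ ≤ X * (Y * Z) := by
      have hX : 0 ≤ X := (norm_nonneg _).trans hx
      have hY : 0 ≤ Y := (norm_nonneg _).trans hy
      gcongr

theorem stmt9_general
    (d : ℕ)
    (A : ℝ → (EuclideanSpace ℝ (Fin d) →L[ℝ] EuclideanSpace ℝ (Fin d)))
    (Astar : EuclideanSpace ℝ (Fin d) →L[ℝ] EuclideanSpace ℝ (Fin d))
    (Ψ : ℝ → ℝ → (EuclideanSpace ℝ (Fin d) →L[ℝ] EuclideanSpace ℝ (Fin d)))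
    (hΨinit : ∀ s ≥ (0 : ℝ), Ψ s s = ContinuousLinearMap.id ℝ _)
    (hΨode : ∀ s ≥ (0 : ℝ), ∀ t ≥ (0 : ℝ),
      HasDerivAt (fun u => Ψ u s) ((A t).comp (Ψ t s)) t)
    (ρ Γ₁ Γ₂ L : ℝ) (hρ : 0 < ρ) (hΓ₁ : 1 ≤ Γ₁) (hL : 0 ≤ L)
    (hexp : ∀ u ≥ (0 : ℝ),
      ‖NormedSpace.exp (u • Astar)‖ ≤ Γ₂ * Real.exp (-ρ * u / 2))
    (hΨbound : ∀ s t : ℝ, 0 ≤ s → s ≤ t →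
      ‖Ψ t s‖ ≤ Γ₂ * Real.exp (-ρ * (t - s) / 2))
    (hAbound : ∀ r ≥ (0 : ℝ), ‖A r - Astar‖ ≤ L * Γ₁ * Real.exp (-ρ * r / 2)) :
    (∀ t u : ℝ, 0 ≤ u → u ≤ t →
      ‖Ψ t (t - u) - NormedSpace.exp (u • Astar)‖
        ≤ 2 * ρ⁻¹ * Γ₁ * Γ₂ ^ 2 * L * Real.exp (-ρ * (t - u) / 2)) ∧
    (∀ u ≥ (0 : ℝ),
      Tendsto (fun t => Ψ t (t - u)) atTop (nhds (NormedSpace.exp (u • Astar)))) := by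
  have hdecay : ∀ t u : ℝ, 0 ≤ u → u ≤ t →
      ‖Ψ t (t - u) - exp (u • Astar)‖
        ≤ 2 * ρ⁻¹ * Γ₁ * Γ₂ ^ 2 * L * Real.exp (-ρ * (t - u) / 2) := by
    intro t u hu hut
    have hs : 0 ≤ t - u := sub_nonneg.2 hut
    have hst : t - u ≤ t := sub_le_self t hu
    have hbound : ∀ r ∈ Ico (t - u) t,
        ‖exp ((t - r) • Astar) * ((A r - Astar) * Ψ r (t - u))‖
          ≤ Γ₁ * Γ₂ ^ 2 * L * Real.exp (-ρ * u / 2) * Real.exp (-(ρ / 2) * r) := by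
      rintro r ⟨hsr, hrt⟩
      refine (norm_mul_mul_le_of_le (hexp _ (sub_nonneg.2 hrt.le)) (hAbound r (hs.trans hsr))
        (hΨbound _ _ hs hsr)).trans_eq ?_
      simp only [mul_assoc, mul_left_comm, ← Real.exp_add, sq]
      ring_nf
    have h := norm_sub_exp_smul_le_of_decay (half_pos hρ) (by positivity) hst
      (fun r hr => hΨode _ hs r (hs.trans hr.1)) (hΨinit _ hs) hbound
    rw [sub_sub_cancel] at h
    calc _ ≤ _ := h
      _ = 2 * ρ⁻¹ * Γ₁ * Γ₂ ^ 2 * L * Real.exp (-ρ * (t - u) / 2) * Real.exp (-ρ * u / 2) := by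
        field_simp
      _ ≤ 2 * ρ⁻¹ * Γ₁ * Γ₂ ^ 2 * L * Real.exp (-ρ * (t - u) / 2) :=
        mul_le_of_le_one_right (by positivity) (Real.exp_le_one_iff.2 (by nlinarith))
  refine ⟨hdecay, fun u hu => ?_⟩
  rw [tendsto_iff_norm_sub_tendsto_zero]
  refine squeeze_zero' (Eventually.of_forall fun _ => norm_nonneg _) ?_
    (tendsto_mul_exp_neg_mul_sub_div_two hρ (2 * ρ⁻¹ * Γ₁ * Γ₂ ^ 2 * L) u)
  filter_upwards [eventually_ge_atTop u] with t ht using hdecay t u hu ht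

/-- If `Ψ(·,s)` is the principal solution of `Ẏ = A(t)Y`, with
`‖exp(uA*)‖ ≤ Γ₂e^{−ρu/2}`, `‖Ψ(t,s)‖ ≤ Γ₂e^{−ρ(t−s)/2}` and
`‖A(r) − A*‖ ≤ LΓ₁e^{−ρr/2}`, then for all `t ≥ u ≥ 0`,
`‖Ψ(t,t−u) − exp(uA*)‖ ≤ 2ρ⁻¹Γ₁Γ₂²L e^{−ρ(t−u)/2}`; in particular
`Ψ(t,t−u) → exp(uA*)` as `t → ∞`. Matrices are represented as operators on `ℝ^d`. -/
theorem stmt9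
    (d : ℕ) (hd : 1 ≤ d)
    (A : ℝ → (EuclideanSpace ℝ (Fin d) →L[ℝ] EuclideanSpace ℝ (Fin d)))
    (hA : ContinuousOn A (Ici (0 : ℝ)))
    (Astar : EuclideanSpace ℝ (Fin d) →L[ℝ] EuclideanSpace ℝ (Fin d))
    (Ψ : ℝ → ℝ → (EuclideanSpace ℝ (Fin d) →L[ℝ] EuclideanSpace ℝ (Fin d)))
    (hΨinit : ∀ s ≥ (0 : ℝ), Ψ s s = ContinuousLinearMap.id ℝ _)
    (hΨode : ∀ s ≥ (0 : ℝ), ∀ t ≥ (0 : ℝ),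
      HasDerivAt (fun u => Ψ u s) ((A t).comp (Ψ t s)) t)
    (ρ Γ₁ Γ₂ L : ℝ) (hρ : 0 < ρ) (hΓ₁ : 1 ≤ Γ₁) (hΓ₂ : 1 ≤ Γ₂) (hL : 0 ≤ L)
    (hexp : ∀ u ≥ (0 : ℝ),
      ‖NormedSpace.exp (u • Astar)‖ ≤ Γ₂ * Real.exp (-ρ * u / 2))
    (hΨbound : ∀ s t : ℝ, 0 ≤ s → s ≤ t →
      ‖Ψ t s‖ ≤ Γ₂ * Real.exp (-ρ * (t - s) / 2))
    (hAbound : ∀ r ≥ (0 : ℝ), ‖A r - Astar‖ ≤ L * Γ₁ * Real.exp (-ρ * r / 2)) :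
    (∀ t u : ℝ, 0 ≤ u → u ≤ t →
      ‖Ψ t (t - u) - NormedSpace.exp (u • Astar)‖
        ≤ 2 * ρ⁻¹ * Γ₁ * Γ₂ ^ 2 * L * Real.exp (-ρ * (t - u) / 2)) ∧
    (∀ u ≥ (0 : ℝ),
      Tendsto (fun t => Ψ t (t - u)) atTop (nhds (NormedSpace.exp (u • Astar)))) :=
  stmt9_general d A Astar Ψ hΨinit hΨode ρ Γ₁ Γ₂ L hρ hΓ₁ hL hexp hΨbound hAbound
end

section
/- Let N = (N(t))_{t≥0} be a standard Poisson process: N takes values in ℕ, has right-continuous sample paths, N(0) = 0 almost surely, and for all 0 ≤ s ≤ t the increment N(t) − N(s) is independent of (N(r))_{r ≤ s} and has the Poisson distribution with mean t − s. Then for all S > 0 and A > 0 with A ≤ 2·log(2)·S, one has ℙ( sup_{0 ≤ s ≤ S} |N(s) − s| ≥ A ) ≤ 2·exp(−A²/(4S)). -/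
/-!
For every `c`, `exp (c (N t - t))` is a nonnegative submartingale: by independence of increments
and the Poisson moment generating function, passing from time `s` to time `t` multiplies it by a
factor of mean `exp ((t - s) (exp c - 1 - c)) ≥ 1`. Doob's maximal inequality along a finite grid
gives the Chernoff bound `exp (S (exp c - 1 - c) - c A)` for each one-sided maximum; choosing
`c = ± A / (2 S)` and using `exp c - 1 - c ≤ c ^ 2` for `|c| ≤ 1` turns it into `exp (-A² / (4 S))`.
Right-continuity of the paths lets the supremum over `[0, S]` be taken along dyadic grids, and the
event `sup ≥ A` is handled by letting the level increase to `A`.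
-/

open Set Filter Topology MeasureTheory ProbabilityTheory
open scoped NNReal ENNReal

lemma integral_exp_mul_poissonMeasure (r : ℝ≥0) (c : ℝ) :
    ∫ n, Real.exp (c * n) ∂poissonMeasure r = Real.exp (r * (Real.exp c - 1)) := by
  rw [integral_poissonMeasure]
  have hsum := ((NormedSpace.expSeries_div_hasSum_exp ((r : ℝ) * Real.exp c)).mul_left
    (Real.exp (-r)))
  rw [← Real.exp_eq_exp_ℝ] at hsum
  convert hsum.tsum_eq using 1
  · congr 1 with n
    rw [mul_pow, ← Real.exp_nat_mul, smul_eq_mul, mul_comm (n : ℝ) c]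
    ring
  · rw [← Real.exp_add]; ring_nf

lemma hasLaw_map_cast_poissonMeasure {Ω R : Type*} [MeasurableSpace Ω] {P : Measure Ω}
    [IsProbabilityMeasure P] [AddMonoidWithOne R] [CharZero R] [Countable R]
    [MeasurableSpace R] [MeasurableSingletonClass R] {D : Ω → R} (hD : Measurable D)
    (r : ℝ≥0) (h : ∀ k : ℕ, P (D ⁻¹' {(k : R)}) = poissonMeasure r {k}) :
    HasLaw D ((poissonMeasure r).map (Nat.cast : ℕ → R)) P := by
  refine ⟨hD.aemeasurable, ?_⟩
  -- `Po(R, r)` is a restriction of the law of `D`; a probability measure below another equals it.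
  have hmap : (poissonMeasure r).map (Nat.cast : ℕ → R) = (P.map D).restrict (range Nat.cast) := by
    refine Measure.ext_of_singleton fun z => ?_
    rw [Measure.restrict_apply (measurableSet_singleton z), Measure.map_apply .of_discrete
      (measurableSet_singleton z)]
    by_cases hz : z ∈ range (Nat.cast : ℕ → R)
    · obtain ⟨k, rfl⟩ := hz
      rw [singleton_inter_of_mem (mem_range_self k), Measure.map_apply hD
        (measurableSet_singleton _), h, ← image_singleton, Nat.cast_injective.preimage_image]
    · rw [singleton_inter_of_notMem hz, measure_empty, preimage_singleton_eq_empty.mpr hz,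
        measure_empty]
  have : IsProbabilityMeasure (P.map D) := Measure.isProbabilityMeasure_map hD.aemeasurable
  exact (Measure.eq_of_le_of_isProbabilityMeasure (hmap ▸ Measure.restrict_le_self)).symm

lemma biSup_le_biSup_of_continuousWithinAt_Ici {α β : Type*} [TopologicalSpace α] [Preorder α]
    [CompleteLattice β] [TopologicalSpace β] [ClosedIicTopology β] {g : α → β} {s D : Set α}
    (hg : ∀ x ∈ s, ContinuousWithinAt g (Ici x) x) (hD : ∀ x ∈ s, x ∈ closure (D ∩ Ici x)) :
    ⨆ x ∈ s, g x ≤ ⨆ x ∈ D, g x :=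
  iSup₂_le fun x hx => closure_minimal (t := Iic (⨆ y ∈ D, g y))
    (image_subset_iff.2 fun y hy => le_iSup₂ (f := fun y (_ : y ∈ D) => g y) y hy.1) isClosed_Iic
    (((hg x hx).mono inter_subset_right).mem_closure_image (hD x hx))

lemma ContinuousWithinAt.ofReal_abs_natCast_sub {f : ℝ → ℕ} {T : Set ℝ} {x : ℝ}
    (hf : ContinuousWithinAt f T x) :
    ContinuousWithinAt (fun s => ENNReal.ofReal |(f s : ℝ) - s|) T x :=
  ENNReal.continuous_ofReal.continuousAt.comp_continuousWithinAt
    ((continuous_of_discreteTopology (f := (Nat.cast : ℕ → ℝ))).continuousAt.comp_continuousWithinAt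
      hf |>.sub continuousWithinAt_id).abs

noncomputable def dyadicGrid (S : ℝ) (n k : ℕ) : ℝ := S * k / 2 ^ n

lemma dyadicGrid_succ_two_mul (S : ℝ) (n k : ℕ) :
    dyadicGrid S (n + 1) (2 * k) = dyadicGrid S n k := by
  simp only [dyadicGrid]; push_cast; field_simp; ring

lemma monotone_dyadicGrid {S : ℝ} (hS : 0 ≤ S) (n : ℕ) : Monotone (dyadicGrid S n) :=
  fun i j hij => by simp only [dyadicGrid]; gcongr

lemma mem_closure_dyadicGrid_inter_Ici {S x : ℝ} (hS : 0 < S) (hx : x ∈ Icc 0 S) :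
    x ∈ closure ({y | ∃ n, ∃ k ≤ 2 ^ n, dyadicGrid S n k = y} ∩ Ici x) := by
  rw [Metric.mem_closure_iff]
  intro ε hε
  obtain ⟨n, hn⟩ := exists_pow_lt_of_lt_one (div_pos hε hS) (by norm_num : (1 / 2 : ℝ) < 1)
  have hp : (0 : ℝ) < 2 ^ n := by positivity
  set k := ⌈x * 2 ^ n / S⌉₊
  have hk_ge : x * 2 ^ n / S ≤ k := Nat.le_ceil _
  have hk_lt : (k : ℝ) < x * 2 ^ n / S + 1 := Nat.ceil_lt_add_one (by have := hx.1; positivity)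
  have hk_le : k ≤ 2 ^ n := by
    refine Nat.ceil_le.2 ?_
    rw [div_le_iff₀ hS]
    push_cast
    nlinarith [hx.2]
  have hx_le : x ≤ dyadicGrid S n k := by
    rw [dyadicGrid, le_div_iff₀ hp]
    rw [div_le_iff₀ hS] at hk_ge
    linarith
  have hlt : dyadicGrid S n k < x + ε := by
    rw [one_div_pow, lt_div_iff₀ hS, one_div, inv_mul_lt_iff₀ hp] at hn
    have hSk : S * k < x * 2 ^ n + S :=
      calc S * k < S * (x * 2 ^ n / S + 1) := by gcongr
        _ = x * 2 ^ n + S := by field_simp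
    rw [dyadicGrid, div_lt_iff₀ hp]
    linarith
  refine ⟨dyadicGrid S n k, ⟨⟨n, k, hk_le, rfl⟩, hx_le⟩, ?_⟩
  rw [dist_comm, Real.dist_eq, abs_of_nonneg (sub_nonneg.2 hx_le)]
  linarith

section PoissonProcess

variable {Ω : Type*} {N : ℝ → Ω → ℕ}

abbrev sigmaUpTo (N : ℝ → Ω → ℕ) (s : ℝ) : MeasurableSpace Ω :=
  ⨆ r ∈ Icc (0 : ℝ) s, MeasurableSpace.comap (N r) ⊤

lemma comap_le_sigmaUpTo {r s : ℝ} (hr : 0 ≤ r) (hrs : r ≤ s) :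
    MeasurableSpace.comap (N r) ⊤ ≤ sigmaUpTo N s :=
  le_iSup₂ (f := fun r (_ : r ∈ Icc (0 : ℝ) s) => MeasurableSpace.comap (N r) ⊤) r ⟨hr, hrs⟩

variable [MeasurableSpace Ω]

lemma sigmaUpTo_le (hmeas : ∀ t : ℝ, Measurable (N t)) (s : ℝ) :
    sigmaUpTo N s ≤ ‹MeasurableSpace Ω› :=
  iSup₂_le fun r _ => (hmeas r).comap_le

def HasPoissonIncrements (P : Measure Ω) (N : ℝ → Ω → ℕ) : Prop :=
  ∀ s t : ℝ, 0 ≤ s → s ≤ t → ∀ k : ℕ,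
    P {ω | (N t ω : ℤ) - (N s ω : ℤ) = (k : ℤ)}
      = ENNReal.ofReal (Real.exp (-(t - s)) * (t - s) ^ k / (Nat.factorial k))

def HasIndependentIncrements (P : Measure Ω) (N : ℝ → Ω → ℕ) : Prop :=
  ∀ s t : ℝ, 0 ≤ s → s ≤ t →
    Indep (sigmaUpTo N s) (MeasurableSpace.comap (fun ω => (N t ω : ℤ) - (N s ω : ℤ)) ⊤) P

variable {P : Measure Ω} [IsProbabilityMeasure P]

lemma HasPoissonIncrements.hasLaw (hdist : HasPoissonIncrements P N)
    (hmeas : ∀ t : ℝ, Measurable (N t)) {s t : ℝ} (hs : 0 ≤ s) (hst : s ≤ t) :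
    HasLaw (fun ω => (N t ω : ℤ) - N s ω)
      ((poissonMeasure (t - s).toNNReal).map (Nat.cast : ℕ → ℤ)) P := by
  refine hasLaw_map_cast_poissonMeasure (by fun_prop) _ fun k => ?_
  rw [poissonMeasure_singleton, Real.coe_toNNReal _ (sub_nonneg.2 hst)]
  exact hdist s t hs hst k

lemma HasPoissonIncrements.integral_exp_mul (hdist : HasPoissonIncrements P N)
    (hmeas : ∀ t : ℝ, Measurable (N t)) {s t : ℝ} (hs : 0 ≤ s) (hst : s ≤ t) (c : ℝ) :
    ∫ ω, Real.exp (c * ((N t ω : ℝ) - N s ω)) ∂P = Real.exp ((t - s) * (Real.exp c - 1)) := by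
  have h := (hdist.hasLaw hmeas hs hst).integral_comp
    (f := fun z : ℤ => Real.exp (c * z)) .of_discrete
  rw [integral_map .of_discrete .of_discrete] at h
  simp only [Function.comp_def, Int.cast_sub, Int.cast_natCast] at h
  rw [h, integral_exp_mul_poissonMeasure, Real.coe_toNNReal _ (sub_nonneg.2 hst)]

noncomputable def compensatedExp (N : ℝ → Ω → ℕ) (c t : ℝ) (ω : Ω) : ℝ :=
  Real.exp (c * ((N t ω : ℝ) - t))

lemma integral_compensatedExp (hdist : HasPoissonIncrements P N)
    (hmeas : ∀ t : ℝ, Measurable (N t)) (h0 : ∀ᵐ ω ∂P, N 0 ω = 0) (c : ℝ) {t : ℝ}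
    (ht : 0 ≤ t) :
    ∫ ω, compensatedExp N c t ω ∂P = Real.exp (t * (Real.exp c - 1 - c)) := by
  have hfactor : compensatedExp N c t
      =ᵐ[P] fun ω => Real.exp (c * ((N t ω : ℝ) - N 0 ω)) * Real.exp (-(c * t)) := by
    filter_upwards [h0] with ω hω
    rw [compensatedExp, hω, ← Real.exp_add]
    push_cast
    ring_nf
  rw [integral_congr_ae hfactor, integral_mul_const, hdist.integral_exp_mul hmeas le_rfl ht,
    ← Real.exp_add]
  ring_nf

lemma integrable_compensatedExp (hdist : HasPoissonIncrements P N)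
    (hmeas : ∀ t : ℝ, Measurable (N t)) (h0 : ∀ᵐ ω ∂P, N 0 ω = 0) (c : ℝ) {t : ℝ}
    (ht : 0 ≤ t) : Integrable (compensatedExp N c t) P :=
  Integrable.of_integral_ne_zero <| by
    rw [integral_compensatedExp hdist hmeas h0 c ht]; positivity

lemma setIntegral_compensatedExp_le (hindep : HasIndependentIncrements P N)
    (hdist : HasPoissonIncrements P N) (hmeas : ∀ t : ℝ, Measurable (N t)) (c : ℝ)
    {s t : ℝ} (hs : 0 ≤ s) (hst : s ≤ t) {E : Set Ω} (hE : MeasurableSet[sigmaUpTo N s] E) :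
    ∫ ω in E, compensatedExp N c s ω ∂P ≤ ∫ ω in E, compensatedExp N c t ω ∂P := by
  set W : Ω → ℝ := fun ω => Real.exp (c * (((N t ω : ℤ) - N s ω : ℤ) - (t - s)))
  have hfactor :
      E.indicator (compensatedExp N c t) = E.indicator (compensatedExp N c s) * W := by
    ext ω
    by_cases hω : ω ∈ E
    · simp only [Pi.mul_apply, indicator_of_mem hω, compensatedExp, W, ← Real.exp_add]
      push_cast
      ring_nf
    · simp [indicator_of_notMem hω]
  have hW : 1 ≤ ∫ ω, W ω ∂P := by
    have hW_eq :
        W = fun ω => Real.exp (c * ((N t ω : ℝ) - N s ω)) * Real.exp (-(c * (t - s))) := by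
      ext ω
      simp only [W, ← Real.exp_add]
      push_cast
      ring_nf
    rw [hW_eq, integral_mul_const, hdist.integral_exp_mul hmeas hs hst c, ← Real.exp_add,
      Real.one_le_exp_iff]
    nlinarith [Real.add_one_le_exp c]
  have hpast : Measurable[sigmaUpTo N s] (E.indicator (compensatedExp N c s)) :=
    (((measurable_from_top (f := fun n : ℕ => Real.exp (c * ((n : ℝ) - s)))).comp
      (comap_measurable (N s))).mono (comap_le_sigmaUpTo hs le_rfl) le_rfl).indicator hE
  have hindepW : IndepFun (E.indicator (compensatedExp N c s)) W P :=
    (IndepFun_iff_Indep _ _ _).2 <| indep_of_indep_of_le (hindep s t hs hst) hpast.comap_le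
      ((measurable_from_top (f := fun z : ℤ => Real.exp (c * ((z : ℝ) - (t - s))))).comp
        (comap_measurable fun ω => (N t ω : ℤ) - N s ω)).comap_le
  have hE' : MeasurableSet E := sigmaUpTo_le hmeas s E hE
  calc ∫ ω in E, compensatedExp N c s ω ∂P
      = ∫ ω, E.indicator (compensatedExp N c s) ω ∂P := (integral_indicator hE').symm
    _ ≤ (∫ ω, E.indicator (compensatedExp N c s) ω ∂P) * ∫ ω, W ω ∂P :=
      le_mul_of_one_le_right (integral_nonneg fun ω =>
        indicator_nonneg (fun ω _ => (Real.exp_pos _).le) ω) hW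
    _ = ∫ ω, E.indicator (compensatedExp N c t) ω ∂P := by
      rw [hfactor, hindepW.integral_mul_eq_mul_integral
        (hpast.mono (sigmaUpTo_le hmeas s) le_rfl).aestronglyMeasurable
        (Measurable.aestronglyMeasurable (by fun_prop))]
    _ = ∫ ω in E, compensatedExp N c t ω ∂P := integral_indicator hE'

lemma submartingale_compensatedExp (hindep : HasIndependentIncrements P N)
    (hdist : HasPoissonIncrements P N) (hmeas : ∀ t : ℝ, Measurable (N t))
    (h0 : ∀ᵐ ω ∂P, N 0 ω = 0) (c : ℝ) {τ : ℕ → ℝ} (hτ : Monotone τ) (hτ0 : 0 ≤ τ 0) :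
    Submartingale (fun k => compensatedExp N c (τ k))
      (Filtration.natural (fun k => N (τ k)) fun k => (hmeas (τ k)).stronglyMeasurable) P := by
  have hnatural_le (k : ℕ) : Filtration.natural (fun k => N (τ k))
      (fun k => (hmeas (τ k)).stronglyMeasurable) k ≤ sigmaUpTo N (τ k) :=
    iSup₂_le fun j hj => comap_le_sigmaUpTo (hτ0.trans (hτ j.zero_le)) (hτ hj)
  refine submartingale_of_setIntegral_le (fun k => ?_)
    (fun k => integrable_compensatedExp hdist hmeas h0 c (hτ0.trans (hτ k.zero_le)))
    (fun i j hij E hE => setIntegral_compensatedExp_le hindep hdist hmeas c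
      (hτ0.trans (hτ i.zero_le)) (hτ hij) (hnatural_le i E hE))
  exact ((Measurable.of_discrete (f := fun n : ℕ => Real.exp (c * ((n : ℝ) - τ k)))).comp
    (Filtration.stronglyAdapted_natural (u := fun k => N (τ k))
      (fun k => (hmeas (τ k)).stronglyMeasurable) k).measurable).stronglyMeasurable

lemma measure_exists_le_mul_sub_le (hindep : HasIndependentIncrements P N)
    (hdist : HasPoissonIncrements P N) (hmeas : ∀ t : ℝ, Measurable (N t))
    (h0 : ∀ᵐ ω ∂P, N 0 ω = 0) (c a : ℝ) {τ : ℕ → ℝ} (hτ : Monotone τ) (hτ0 : 0 ≤ τ 0) (m : ℕ) :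
    P {ω | ∃ k ≤ m, a ≤ c * ((N (τ k) ω : ℝ) - τ k)}
      ≤ ENNReal.ofReal (Real.exp (τ m * (Real.exp c - 1 - c) - a)) := by
  have hτm : 0 ≤ τ m := hτ0.trans (hτ m.zero_le)
  set ε : ℝ≥0 := (Real.exp a).toNNReal
  have hε : (ε : ℝ) = Real.exp a := Real.coe_toNNReal _ (Real.exp_pos a).le
  have hsub : {ω | ∃ k ≤ m, a ≤ c * ((N (τ k) ω : ℝ) - τ k)} ⊆ {ω | (ε : ℝ) ≤
      (Finset.range (m + 1)).sup' Finset.nonempty_range_add_one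
        fun k => compensatedExp N c (τ k) ω} := by
    rintro ω ⟨k, hk, hak⟩
    rw [mem_ofPred_eq, Finset.le_sup'_iff, hε]
    exact ⟨k, Finset.mem_range.2 (Nat.lt_succ_of_le hk), Real.exp_le_exp.2 hak⟩
  have hdoob := maximal_ineq (submartingale_compensatedExp hindep hdist hmeas h0 c hτ hτ0)
    (fun k ω => (Real.exp_pos _).le) (ε := ε) m
  have hmul : ε * P {ω | ∃ k ≤ m, a ≤ c * ((N (τ k) ω : ℝ) - τ k)}
      ≤ ENNReal.ofReal (Real.exp (τ m * (Real.exp c - 1 - c))) := by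
    refine le_trans (by gcongr) (hdoob.trans ?_)
    rw [← integral_compensatedExp hdist hmeas h0 c hτm]
    exact ENNReal.ofReal_le_ofReal (setIntegral_le_integral
      (integrable_compensatedExp hdist hmeas h0 c hτm)
      (ae_of_all _ fun ω => (Real.exp_pos _).le))
  rw [Real.exp_sub, ENNReal.ofReal_div_of_pos (Real.exp_pos a), ENNReal.le_div_iff_mul_le
    (Or.inl (by positivity)) (Or.inl ENNReal.ofReal_ne_top), mul_comm]
  exact hmul

lemma measure_exists_le_abs_sub_le (hindep : HasIndependentIncrements P N)
    (hdist : HasPoissonIncrements P N) (hmeas : ∀ t : ℝ, Measurable (N t))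
    (h0 : ∀ᵐ ω ∂P, N 0 ω = 0) {S A : ℝ} (hS : 0 < S) (hA : 0 < A) (hAS : A ≤ 2 * S)
    {τ : ℕ → ℝ} (hτ : Monotone τ) (hτ0 : 0 ≤ τ 0) {m : ℕ} (hτm : τ m ≤ S) :
    P {ω | ∃ k ≤ m, A ≤ |(N (τ k) ω : ℝ) - τ k|}
      ≤ ENNReal.ofReal (2 * Real.exp (-(A ^ 2) / (4 * S))) := by
  set l := A / (2 * S) with hl
  have hl0 : 0 < l := by positivity
  have hl1 : l ≤ 1 := (div_le_one (by positivity)).2 hAS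
  have hone (c : ℝ) (hc : |c| = l) : P {ω | ∃ k ≤ m, l * A ≤ c * ((N (τ k) ω : ℝ) - τ k)}
      ≤ ENNReal.ofReal (Real.exp (-(A ^ 2) / (4 * S))) := by
    refine (measure_exists_le_mul_sub_le hindep hdist hmeas h0 c _ hτ hτ0 m).trans ?_
    refine ENNReal.ofReal_le_ofReal (Real.exp_le_exp.2 ?_)
    -- `l = A / (2 S)` minimises `S l ^ 2 - l A`.
    have hquad : Real.exp c - 1 - c ≤ l ^ 2 := by
      rw [← hc, sq_abs]
      exact (abs_le.1 (Real.abs_exp_sub_one_sub_id_le (hc ▸ hl1))).2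
    have hconv : 0 ≤ Real.exp c - 1 - c := by linarith [Real.add_one_le_exp c]
    calc τ m * (Real.exp c - 1 - c) - l * A ≤ S * l ^ 2 - l * A := by gcongr
      _ = -(A ^ 2) / (4 * S) := by rw [hl]; field_simp; ring
  calc P {ω | ∃ k ≤ m, A ≤ |(N (τ k) ω : ℝ) - τ k|}
      ≤ P ({ω | ∃ k ≤ m, l * A ≤ l * ((N (τ k) ω : ℝ) - τ k)}
          ∪ {ω | ∃ k ≤ m, l * A ≤ -l * ((N (τ k) ω : ℝ) - τ k)}) := by
        refine measure_mono fun ω ⟨k, hk, hAk⟩ => ?_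
        rcases le_abs'.1 hAk with h | h
        · exact Or.inr ⟨k, hk, by nlinarith⟩
        · exact Or.inl ⟨k, hk, by nlinarith⟩
    _ ≤ ENNReal.ofReal (Real.exp (-(A ^ 2) / (4 * S)))
          + ENNReal.ofReal (Real.exp (-(A ^ 2) / (4 * S))) :=
        (measure_union_le _ _).trans (add_le_add (hone l (abs_of_pos hl0))
          (hone (-l) (by rw [abs_neg, abs_of_pos hl0])))
    _ = ENNReal.ofReal (2 * Real.exp (-(A ^ 2) / (4 * S))) := by
        rw [← ENNReal.ofReal_add (by positivity) (by positivity), two_mul]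

lemma measure_lt_iSup_abs_sub_le
    (hrc : ∀ ω, ∀ t ≥ (0 : ℝ), ContinuousWithinAt (fun u => N u ω) (Ici t) t)
    (hindep : HasIndependentIncrements P N) (hdist : HasPoissonIncrements P N)
    (hmeas : ∀ t : ℝ, Measurable (N t)) (h0 : ∀ᵐ ω ∂P, N 0 ω = 0) {S A : ℝ} (hS : 0 < S)
    (hA : 0 < A) (hAS : A ≤ 2 * S) :
    P {ω | ENNReal.ofReal A < ⨆ s ∈ Icc (0 : ℝ) S, ENNReal.ofReal |(N s ω : ℝ) - s|}
      ≤ ENNReal.ofReal (2 * Real.exp (-(A ^ 2) / (4 * S))) := by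
  set E : ℕ → Set Ω := fun n =>
    {ω | ∃ k ≤ 2 ^ n, A ≤ |(N (dyadicGrid S n k) ω : ℝ) - dyadicGrid S n k|}
  have hsub : {ω | ENNReal.ofReal A < ⨆ s ∈ Icc (0 : ℝ) S, ENNReal.ofReal |(N s ω : ℝ) - s|}
      ⊆ ⋃ n, E n := by
    intro ω hω
    have hgrid := biSup_le_biSup_of_continuousWithinAt_Ici
      (fun x hx => (hrc ω x hx.1).ofReal_abs_natCast_sub)
      (fun x hx => mem_closure_dyadicGrid_inter_Ici hS hx)
    obtain ⟨_, ⟨n, k, hk, rfl⟩, hAk⟩ := lt_biSup_iff.1 (hω.trans_le hgrid)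
    exact mem_iUnion.2 ⟨n, k, hk, ((ENNReal.ofReal_lt_ofReal_iff'.1 hAk).1).le⟩
  have hmono : Monotone E := monotone_nat_of_le_succ fun n ω ⟨k, hk, hAk⟩ =>
    ⟨2 * k, by rw [pow_succ]; omega, by rwa [dyadicGrid_succ_two_mul]⟩
  calc _ ≤ P (⋃ n, E n) := measure_mono hsub
    _ = ⨆ n, P (E n) := hmono.measure_iUnion
    _ ≤ _ := iSup_le fun n => measure_exists_le_abs_sub_le hindep hdist hmeas h0 hS hA hAS
        (monotone_dyadicGrid hS.le n) (by simp [dyadicGrid]) (by simp [dyadicGrid])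

end PoissonProcess

/-- (Chernoff bound for the compensated Poisson process.)
If `N` is a standard Poisson process (ℕ-valued, right-continuous paths, `N(0) = 0` a.s.,
with increments `N(t) − N(s)` independent of the past and Poisson of mean `t − s`),
then for all `S > 0` and `0 < A ≤ 2 log(2) S`,
`ℙ(sup_{0≤s≤S} |N(s) − s| ≥ A) ≤ 2 exp(−A²/(4S))`. -/
theorem stmt11
    {Ω : Type*} [MeasurableSpace Ω] (P : Measure Ω) [IsProbabilityMeasure P]
    (N : ℝ → Ω → ℕ)
    (hmeas : ∀ t : ℝ, Measurable (N t))
    (hrc : ∀ ω, ∀ t ≥ (0 : ℝ), ContinuousWithinAt (fun u => N u ω) (Ici t) t)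
    (h0 : ∀ᵐ ω ∂P, N 0 ω = 0)
    (hindep : ∀ s t : ℝ, 0 ≤ s → s ≤ t →
      Indep (⨆ r ∈ Icc (0 : ℝ) s, MeasurableSpace.comap (N r) ⊤)
        (MeasurableSpace.comap (fun ω => (N t ω : ℤ) - (N s ω : ℤ)) ⊤) P)
    (hdist : ∀ s t : ℝ, 0 ≤ s → s ≤ t → ∀ k : ℕ,
      P {ω | (N t ω : ℤ) - (N s ω : ℤ) = (k : ℤ)}
        = ENNReal.ofReal (Real.exp (-(t - s)) * (t - s) ^ k / (Nat.factorial k))) :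
    ∀ S A : ℝ, 0 < S → 0 < A → A ≤ 2 * Real.log 2 * S →
      P {ω | ENNReal.ofReal A ≤
          ⨆ s ∈ Icc (0 : ℝ) S, ENNReal.ofReal |(N s ω : ℝ) - s|}
        ≤ ENNReal.ofReal (2 * Real.exp (-(A ^ 2) / (4 * S))) := by
  intro S A hS hA hAlog
  have hAS : A ≤ 2 * S := by nlinarith [Real.log_two_lt_d9]
  have hbound : Filter.Tendsto (fun a => ENNReal.ofReal (2 * Real.exp (-(a ^ 2) / (4 * S))))
      (𝓝[<] A) (𝓝 (ENNReal.ofReal (2 * Real.exp (-(A ^ 2) / (4 * S))))) :=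
    (ENNReal.continuous_ofReal.comp (by fun_prop)).tendsto A |>.mono_left nhdsWithin_le_nhds
  refine ge_of_tendsto hbound ?_
  filter_upwards [Ioo_mem_nhdsLT hA] with a ⟨ha0, haA⟩
  refine (measure_mono fun ω hω => ?_).trans
    (measure_lt_iSup_abs_sub_le hrc hindep hdist hmeas h0 hS ha0 (by linarith))
  exact ((ENNReal.ofReal_lt_ofReal_iff hA).2 haA).trans_le hω
end

section
/- Let B = (B(t))_{t≥0} be a standard real Brownian motion: B has continuous sample paths, B(0) = 0 almost surely, and for all 0 ≤ s ≤ t the increment B(t) − B(s) is independent of (B(r))_{r ≤ s} and is Gaussian with mean 0 and variance t − s. Then for all S, T, A > 0: ℙ( sup{ |B(t) − B(s)| : 0 ≤ s, t ≤ T, |t − s| ≤ S } ≥ A ) ≤ 2·⌈T/S⌉·exp(−A²/(18S)). -/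
open Set MeasureTheory ProbabilityTheory Filter Topology
open scoped NNReal ENNReal

/-!
Along increasing times `τ k ≥ u`, `exp (c (B (τ k) - B u))` is a nonnegative submartingale, since
each new factor is independent of the past with mean `exp (c² Δτ / 2) ≥ 1`. Doob's maximal
inequality with `c = ± b / S` bounds `P (max_k |B (τ k) - B u| ≥ b)` by `2 exp (-b² / (2S))` when
all `τ k ≤ u + S`; through dyadic grids and path continuity the same bound holds for the supremum
over the whole block `[u, u + S]`.

If `|B t - B s| > a` with `|t - s| ≤ S`, then `s` and `t` lie in one block `[kS, (k+1)S]` or in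
two consecutive ones, so some increment from the left end of a block exceeds `a / 3`. A union bound
over the `⌈T / S⌉` blocks covering `[0, T]` gives `2 ⌈T/S⌉ exp (-a² / (18 S))`; let `a ↑ A`.
-/

structure HasIndepGaussianIncrements {Ω : Type*} [MeasurableSpace Ω] (P : Measure Ω)
    (B : ℝ → Ω → ℝ) : Prop where
  measurable : ∀ t, Measurable (B t)
  indep : ∀ s t : ℝ, 0 ≤ s → s ≤ t →
    Indep (⨆ r ∈ Icc (0 : ℝ) s, MeasurableSpace.comap (B r) inferInstance)
      (MeasurableSpace.comap (fun ω => B t ω - B s ω) inferInstance) P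
  map_sub : ∀ s t : ℝ, 0 ≤ s → s ≤ t →
    Measure.map (fun ω => B t ω - B s ω) P = gaussianReal 0 (Real.toNNReal (t - s))

def filtrationAlong {Ω : Type*} [m : MeasurableSpace Ω] {B : ℝ → Ω → ℝ}
    (hB : ∀ t, Measurable (B t)) {τ : ℕ → ℝ} (hτ : Monotone τ) : Filtration ℕ m where
  seq k := ⨆ r ∈ Icc (0 : ℝ) (τ k), MeasurableSpace.comap (B r) inferInstance
  mono' _ _ hij := iSup₂_le fun r hr => le_iSup₂_of_le r ⟨hr.1, hr.2.trans (hτ hij)⟩ le_rfl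
  le' _ := iSup₂_le fun r _ => (hB r).comap_le

lemma measurable_filtrationAlong {Ω : Type*} [MeasurableSpace Ω] {B : ℝ → Ω → ℝ}
    (hB : ∀ t, Measurable (B t)) {τ : ℕ → ℝ} (hτ : Monotone τ) {k : ℕ} {r : ℝ}
    (hr : r ∈ Icc 0 (τ k)) : Measurable[filtrationAlong hB hτ k] (B r) :=
  measurable_iff_comap_le.mpr (le_iSup₂_of_le r hr le_rfl)

noncomputable def modulusOfContinuity (f : ℝ → ℝ) (T S : ℝ) : ℝ≥0∞ :=
  ⨆ s ∈ Icc (0 : ℝ) T, ⨆ t ∈ Icc (0 : ℝ) T, ⨆ (_ : |t - s| ≤ S), ENNReal.ofReal |f t - f s|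

lemma exists_lt_abs_sub_of_lt_abs_sub {f : ℝ → ℝ} {S T a s t : ℝ} {N : ℕ} (hS : 0 < S)
    (hTN : T ≤ N * S) (ha : 0 ≤ a) (hs : s ∈ Icc 0 T) (ht : t ∈ Icc 0 T) (hst : |t - s| ≤ S)
    (h : a < |f t - f s|) :
    ∃ k < N, ∃ r ∈ Icc (k * S) (k * S + S), a / 3 < |f r - f (k * S)| := by
  wlog hle : s ≤ t generalizing s t
  · exact this ht hs (by rwa [abs_sub_comm]) (by rwa [abs_sub_comm]) (le_of_not_ge hle)
  have hlt : s < t := hle.lt_of_ne (by rintro rfl; simp at h; linarith)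
  rw [abs_of_nonneg (sub_nonneg.2 hle)] at hst
  set k := ⌊s / S⌋₊
  have hks : k * S ≤ s := (le_div_iff₀ hS).1 (Nat.floor_le (div_nonneg hs.1 hS.le))
  have hsk : s < k * S + S := by linarith [(div_lt_iff₀ hS).1 (Nat.lt_floor_add_one (s / S))]
  have hkN : (k : ℝ) < N := lt_of_mul_lt_mul_right (by linarith [ht.2]) hS.le
  replace hkN : k < N := mod_cast hkN
  by_contra! hsmall
  have hs_block := hsmall k hkN s ⟨hks, hsk.le⟩
  have htri := abs_sub_le (f t) (f (k * S)) (f s)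
  rw [abs_sub_comm (f (k * S))] at htri
  by_cases htk : t ≤ k * S + S
  · linarith [hsmall k hkN t ⟨by linarith, htk⟩]
  · have hk1N : (k : ℝ) + 1 < N := lt_of_mul_lt_mul_right (by linarith [ht.2]) hS.le
    replace hk1N : k + 1 < N := mod_cast hk1N
    have ht_block := hsmall (k + 1) hk1N t ⟨by push_cast; linarith, by push_cast; linarith⟩
    have hmid_block := hsmall k hkN (k * S + S) ⟨by linarith, le_rfl⟩
    rw [Nat.cast_succ, add_one_mul] at ht_block
    linarith [abs_sub_le (f t) (f (k * S + S)) (f (k * S))]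

lemma exists_lt_abs_sub_of_ofReal_le_modulusOfContinuity {f : ℝ → ℝ} {S T a A : ℝ} {N : ℕ}
    (hS : 0 < S) (hTN : T ≤ N * S) (ha : 0 ≤ a) (haA : a < A)
    (hA : ENNReal.ofReal A ≤ modulusOfContinuity f T S) :
    ∃ k < N, ∃ r ∈ Icc (k * S) (k * S + S), a / 3 < |f r - f (k * S)| := by
  have := ((ENNReal.ofReal_lt_ofReal_iff (ha.trans_lt haA)).2 haA).trans_le hA
  simp only [modulusOfContinuity, lt_iSup_iff] at this
  obtain ⟨s, hs, t, ht, hst, hlt⟩ := this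
  exact exists_lt_abs_sub_of_lt_abs_sub hS hTN ha hs ht hst
    ((ENNReal.ofReal_lt_ofReal_iff_of_nonneg ha).1 hlt)

noncomputable def dyadicTimes (u S : ℝ) (m k : ℕ) : ℝ := u + S * (min k (2 ^ m) : ℕ) / 2 ^ m

lemma monotone_dyadicTimes {u S : ℝ} (hS : 0 ≤ S) (m : ℕ) : Monotone (dyadicTimes u S m) := by
  intro i j hij
  unfold dyadicTimes
  gcongr

@[simp]
lemma dyadicTimes_zero (u S : ℝ) (m : ℕ) : dyadicTimes u S m 0 = u := by
  simp [dyadicTimes]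

@[simp]
lemma dyadicTimes_two_pow (u S : ℝ) (m : ℕ) : dyadicTimes u S m (2 ^ m) = u + S := by
  simp [dyadicTimes]

lemma dyadicTimes_succ_two_mul (u S : ℝ) (m k : ℕ) :
    dyadicTimes u S (m + 1) (2 * k) = dyadicTimes u S m k := by
  simp only [dyadicTimes, pow_succ', Nat.mul_min_mul_left]
  push_cast
  field_simp

lemma exists_dist_dyadicTimes_lt {u S t δ : ℝ} (hS : 0 < S) (ht : t ∈ Icc u (u + S))
    (hδ : 0 < δ) : ∃ m, ∃ k ≤ 2 ^ m, dist (dyadicTimes u S m k) t < δ := by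
  obtain ⟨m, hm⟩ := pow_unbounded_of_one_lt (S / δ) one_lt_two
  have h2m : (0 : ℝ) < 2 ^ m := by positivity
  set x := (t - u) * 2 ^ m / S
  have hx : x ≤ 2 ^ m := by
    rw [div_le_iff₀ hS]
    nlinarith [ht.2]
  set k := ⌊x⌋₊
  have hk : k ≤ 2 ^ m := Nat.floor_le_of_le (by exact_mod_cast hx)
  refine ⟨m, k, hk, ?_⟩
  have hτ : dyadicTimes u S m k = t - S / 2 ^ m * (x - k) := by
    simp only [dyadicTimes, min_eq_left hk, x]
    field_simp
    ring
  have hfrac₀ : 0 ≤ x - k := sub_nonneg.2 (Nat.floor_le (by have := ht.1; positivity))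
  have hfrac₁ : x - k < 1 := by linarith [Nat.lt_floor_add_one x]
  have hmesh : S / 2 ^ m < δ := by
    rw [div_lt_iff₀ h2m]
    rwa [div_lt_iff₀ hδ, mul_comm] at hm
  rw [hτ, Real.dist_eq, sub_sub_cancel_left, abs_neg, abs_of_nonneg (by positivity)]
  calc S / 2 ^ m * (x - k) ≤ S / 2 ^ m * 1 := by gcongr
    _ < δ := by rwa [mul_one]

namespace HasIndepGaussianIncrements

variable {Ω : Type*} [MeasurableSpace Ω] {P : Measure Ω} {B : ℝ → Ω → ℝ} {s t : ℝ}

lemma mgf_sub (hB : HasIndepGaussianIncrements P B) (hs : 0 ≤ s) (hst : s ≤ t) (c : ℝ) :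
    mgf (fun ω => B t ω - B s ω) P c = Real.exp ((t - s) * c ^ 2 / 2) := by
  rw [mgf_gaussianReal (hB.map_sub s t hs hst), Real.coe_toNNReal _ (sub_nonneg.2 hst)]
  ring_nf

lemma integrable_exp_mul_sub [IsProbabilityMeasure P] (hB : HasIndepGaussianIncrements P B)
    (hs : 0 ≤ s) (hst : s ≤ t) (c : ℝ) :
    Integrable (fun ω => Real.exp (c * (B t ω - B s ω))) P := by
  rw [← mgf_pos_iff, hB.mgf_sub hs hst]
  exact Real.exp_pos _

lemma submartingale_exp_mul_sub [IsProbabilityMeasure P] (hB : HasIndepGaussianIncrements P B)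
    {τ : ℕ → ℝ} (hτ : Monotone τ) {u : ℝ} (hu : 0 ≤ u) (huτ : u ≤ τ 0) (c : ℝ) :
    Submartingale (fun k ω => Real.exp (c * (B (τ k) ω - B u ω)))
      (filtrationAlong hB.measurable hτ) P := by
  set 𝒢 := filtrationAlong hB.measurable hτ
  have hτu k : u ≤ τ k := huτ.trans (hτ k.zero_le)
  have hadapted k : StronglyMeasurable[𝒢 k] fun ω => Real.exp (c * (B (τ k) ω - B u ω)) :=
    (Real.measurable_exp.comp (((measurable_filtrationAlong _ hτ ⟨hu.trans (hτu k), le_rfl⟩).sub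
      (measurable_filtrationAlong _ hτ ⟨hu, hτu k⟩)).const_mul c)).stronglyMeasurable
  have hint k := hB.integrable_exp_mul_sub hu (hτu k) c
  refine submartingale_nat hadapted hint fun k => ?_
  have hτk := hτ k.le_succ
  set g : Ω → ℝ := fun ω => Real.exp (c * (B (τ (k + 1)) ω - B (τ k) ω))
  have hsplit : (fun ω => Real.exp (c * (B (τ (k + 1)) ω - B u ω))) =
      (fun ω => Real.exp (c * (B (τ k) ω - B u ω))) * g := by
    ext ω
    simp only [g, Pi.mul_apply, ← Real.exp_add]
    ring_nf
  have hg_int : Integrable g P := hB.integrable_exp_mul_sub (hu.trans (hτu k)) hτk c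
  have hg_indep : P[g|𝒢 k] =ᵐ[P] fun _ => P[g] := by
    have hZ := (hB.measurable (τ (k + 1))).sub (hB.measurable (τ k))
    refine condExp_indep_eq hZ.comap_le (𝒢.le k) ?_ (hB.indep _ _ (hu.trans (hτu k)) hτk).symm
    exact (Real.measurable_exp.comp
      ((measurable_iff_comap_le.mpr le_rfl).const_mul c)).stronglyMeasurable
  have hg_mean : 1 ≤ P[g] := by
    have := hB.mgf_sub (hu.trans (hτu k)) hτk c
    simp only [mgf] at this
    simp only [g, this]
    exact Real.one_le_exp (by have := sub_nonneg.2 hτk; positivity)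
  have hpull := condExp_mul_of_stronglyMeasurable_left (hadapted k) (hsplit ▸ hint (k + 1)) hg_int
  rw [hsplit]
  filter_upwards [hpull, hg_indep] with ω hpull_ω hg_ω
  rw [hpull_ω, Pi.mul_apply, hg_ω]
  exact le_mul_of_one_le_right (Real.exp_pos _).le hg_mean

lemma measure_exists_le_mul_sub_le [IsProbabilityMeasure P] (hB : HasIndepGaussianIncrements P B)
    {τ : ℕ → ℝ} (hτ : Monotone τ) {u : ℝ} (hu : 0 ≤ u) (huτ : u ≤ τ 0) (n : ℕ) (c y : ℝ) :
    P {ω | ∃ k ≤ n, y ≤ c * (B (τ k) ω - B u ω)} ≤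
      ENNReal.ofReal (Real.exp ((τ n - u) * c ^ 2 / 2 - y)) := by
  set X : ℕ → Ω → ℝ := fun k ω => Real.exp (c * (B (τ k) ω - B u ω))
  set ε : ℝ≥0 := Real.toNNReal (Real.exp y)
  have hε : (ε : ℝ) = Real.exp y := Real.coe_toNNReal _ (Real.exp_pos y).le
  set D := {ω | (ε : ℝ) ≤ (Finset.range (n + 1)).sup' Finset.nonempty_range_add_one
    fun k => X k ω}
  have hsub : {ω | ∃ k ≤ n, y ≤ c * (B (τ k) ω - B u ω)} ⊆ D := by
    rintro ω ⟨k, hk, hyk⟩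
    rw [mem_ofPred_eq, hε]
    exact (Real.exp_le_exp.2 hyk).trans
      (Finset.le_sup' (fun k => X k ω) (Finset.mem_range_succ_iff.2 hk))
  have hτn : u ≤ τ n := huτ.trans (hτ n.zero_le)
  have hdoob : (ε : ℝ≥0∞) * P D ≤ ENNReal.ofReal (Real.exp ((τ n - u) * c ^ 2 / 2)) := by
    refine (maximal_ineq (hB.submartingale_exp_mul_sub hτ hu huτ c)
      (fun k ω => (Real.exp_pos _).le) n).trans (ENNReal.ofReal_le_ofReal ?_)
    calc ∫ ω in D, X n ω ∂P ≤ ∫ ω, X n ω ∂P :=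
          setIntegral_le_integral (hB.integrable_exp_mul_sub hu hτn c)
            (ae_of_all _ fun ω => (Real.exp_pos _).le)
      _ = Real.exp ((τ n - u) * c ^ 2 / 2) := hB.mgf_sub hu hτn c
  have hε0 : (ε : ℝ≥0∞) ≠ 0 := by simpa [ε] using Real.exp_pos y
  calc P _ ≤ P D := measure_mono hsub
    _ ≤ ENNReal.ofReal (Real.exp ((τ n - u) * c ^ 2 / 2)) / ε :=
        ENNReal.le_div_iff_mul_le (.inl hε0) (.inl ENNReal.coe_ne_top) |>.2 (by rwa [mul_comm])
    _ = _ := by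
        rw [show (ε : ℝ≥0∞) = ENNReal.ofReal (Real.exp y) from rfl,
          ← ENNReal.ofReal_div_of_pos (Real.exp_pos _), ← Real.exp_sub]

lemma measure_exists_le_abs_sub_le [IsProbabilityMeasure P] (hB : HasIndepGaussianIncrements P B)
    {τ : ℕ → ℝ} (hτ : Monotone τ) {u S b : ℝ} (hu : 0 ≤ u) (huτ : u ≤ τ 0) {n : ℕ}
    (hτn : τ n ≤ u + S) (hS : 0 < S) (hb : 0 ≤ b) :
    P {ω | ∃ k ≤ n, b ≤ |B (τ k) ω - B u ω|} ≤
      ENNReal.ofReal (2 * Real.exp (-b ^ 2 / (2 * S))) := by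
  -- `c = ± b / S` minimises `S c ^ 2 / 2 - |c| b`, the Doob exponent at level `|c| b`
  have hsigned (σ : ℝ) (hσ : σ ^ 2 = 1) :
      P {ω | ∃ k ≤ n, b ^ 2 / S ≤ σ * b / S * (B (τ k) ω - B u ω)} ≤
        ENNReal.ofReal (Real.exp (-b ^ 2 / (2 * S))) := by
    refine (hB.measure_exists_le_mul_sub_le hτ hu huτ n _ _).trans
      (ENNReal.ofReal_le_ofReal (Real.exp_le_exp.2 ?_))
    have hτnu : τ n - u ≤ S := by linarith
    calc (τ n - u) * (σ * b / S) ^ 2 / 2 - b ^ 2 / S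
        = (τ n - u) * (b / S) ^ 2 / 2 - b ^ 2 / S := by
          rw [div_pow, mul_pow, hσ, one_mul, div_pow]
      _ ≤ S * (b / S) ^ 2 / 2 - b ^ 2 / S := by gcongr
      _ = -b ^ 2 / (2 * S) := by field_simp; ring
  have hscale {x : ℝ} (hx : b ≤ x) : b ^ 2 / S ≤ b / S * x := by
    rw [sq, mul_div_right_comm]
    exact mul_le_mul_of_nonneg_left hx (by positivity)
  have hsub : {ω | ∃ k ≤ n, b ≤ |B (τ k) ω - B u ω|} ⊆
      {ω | ∃ k ≤ n, b ^ 2 / S ≤ 1 * b / S * (B (τ k) ω - B u ω)} ∪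
        {ω | ∃ k ≤ n, b ^ 2 / S ≤ -1 * b / S * (B (τ k) ω - B u ω)} := by
    rintro ω ⟨k, hk, hbk⟩
    rcases le_abs.1 hbk with h | h
    · exact .inl ⟨k, hk, by linear_combination hscale h⟩
    · exact .inr ⟨k, hk, by linear_combination hscale h⟩
  calc P _ ≤ P (_ ∪ _) := measure_mono hsub
    _ ≤ _ := measure_union_le _ _
    _ ≤ _ := add_le_add (hsigned 1 (one_pow 2)) (hsigned (-1) (by norm_num))
    _ = _ := by rw [← ENNReal.ofReal_add (Real.exp_pos _).le (Real.exp_pos _).le, ← two_mul]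

lemma measure_exists_lt_abs_sub_le [IsProbabilityMeasure P] (hB : HasIndepGaussianIncrements P B)
    (hcont : ∀ ω, ContinuousOn (fun t => B t ω) (Ici 0)) {u S b : ℝ} (hu : 0 ≤ u) (hS : 0 < S)
    (hb : 0 ≤ b) :
    P {ω | ∃ t ∈ Icc u (u + S), b < |B t ω - B u ω|} ≤
      ENNReal.ofReal (2 * Real.exp (-b ^ 2 / (2 * S))) := by
  set E : ℕ → Set Ω := fun m => {ω | ∃ k ≤ 2 ^ m, b ≤ |B (dyadicTimes u S m k) ω - B u ω|}
  have hE : Monotone E := monotone_nat_of_le_succ fun m ω ⟨k, hk, h⟩ =>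
    ⟨2 * k, by rw [pow_succ]; omega, by rwa [dyadicTimes_succ_two_mul]⟩
  have hsub : {ω | ∃ t ∈ Icc u (u + S), b < |B t ω - B u ω|} ⊆ ⋃ m, E m := by
    rintro ω ⟨t, ht, hbt⟩
    have hnear : ∀ᶠ r in 𝓝[Ici 0] t, b < |B r ω - B u ω| :=
      (((hcont ω).continuousWithinAt (hu.trans ht.1)).sub continuousWithinAt_const).abs.eventually
        (lt_mem_nhds hbt)
    obtain ⟨δ, hδ, hball⟩ := Metric.mem_nhdsWithin_iff.1 hnear
    obtain ⟨m, k, hk, hdist⟩ := exists_dist_dyadicTimes_lt hS ht hδ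
    have hτu : u ≤ dyadicTimes u S m k := by
      simpa using monotone_dyadicTimes (u := u) hS.le m k.zero_le
    exact mem_iUnion.2 ⟨m, k, hk, (hball ⟨hdist, hu.trans hτu⟩).le⟩
  calc P _ ≤ P (⋃ m, E m) := measure_mono hsub
    _ = ⨆ m, P (E m) := hE.measure_iUnion
    _ ≤ _ := iSup_le fun m => hB.measure_exists_le_abs_sub_le (monotone_dyadicTimes hS.le m) hu
      (dyadicTimes_zero u S m).ge (dyadicTimes_two_pow u S m).le hS hb

end HasIndepGaussianIncrements

theorem stmt13_general
    {Ω : Type*} [MeasurableSpace Ω] (P : Measure Ω) [IsProbabilityMeasure P]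
    (B : ℝ → Ω → ℝ)
    (hmeas : ∀ t : ℝ, Measurable (B t))
    (hcont : ∀ ω, ContinuousOn (fun t => B t ω) (Ici (0 : ℝ)))
    (hindep : ∀ s t : ℝ, 0 ≤ s → s ≤ t →
      Indep (⨆ r ∈ Icc (0 : ℝ) s, MeasurableSpace.comap (B r) inferInstance)
        (MeasurableSpace.comap (fun ω => B t ω - B s ω) inferInstance) P)
    (hdist : ∀ s t : ℝ, 0 ≤ s → s ≤ t →
      Measure.map (fun ω => B t ω - B s ω) P = gaussianReal 0 (Real.toNNReal (t - s))) :
    ∀ S T A : ℝ, 0 < S → 0 < T → 0 < A →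
      P {ω | ENNReal.ofReal A ≤
          ⨆ s ∈ Icc (0 : ℝ) T, ⨆ t ∈ Icc (0 : ℝ) T, ⨆ (_ : |t - s| ≤ S),
            ENNReal.ofReal |B t ω - B s ω|}
        ≤ ENNReal.ofReal (2 * (⌈T / S⌉ : ℝ) * Real.exp (-(A ^ 2) / (18 * S))) := by
  intro S T A hS hT hA
  have hB : HasIndepGaussianIncrements P B := ⟨hmeas, hindep, hdist⟩
  set N := ⌈T / S⌉₊
  have hTN : T ≤ N * S := (div_le_iff₀ hS).1 (Nat.le_ceil _)
  set block : ℝ → ℕ → Set Ω :=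
    fun a k => {ω | ∃ r ∈ Icc (k * S) (k * S + S), a / 3 < |B r ω - B (k * S) ω|}
  have hbound : ∀ a ∈ Ioo 0 A, P {ω | ENNReal.ofReal A ≤ modulusOfContinuity (B · ω) T S} ≤
      ENNReal.ofReal (2 * N * Real.exp (-(a ^ 2) / (18 * S))) := by
    rintro a ⟨ha, haA⟩
    calc P _ ≤ P (⋃ k ∈ Finset.range N, block a k) := measure_mono fun ω hω => by
          simpa [block] using
            exists_lt_abs_sub_of_ofReal_le_modulusOfContinuity hS hTN ha.le haA hω
      _ ≤ ∑ k ∈ Finset.range N, P (block a k) := measure_biUnion_finset_le _ _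
      _ ≤ ∑ k ∈ Finset.range N, ENNReal.ofReal (2 * Real.exp (-(a / 3) ^ 2 / (2 * S))) :=
          Finset.sum_le_sum fun k _ =>
            hB.measure_exists_lt_abs_sub_le hcont (by positivity) hS (by positivity)
      _ = _ := by
          rw [Finset.sum_const, Finset.card_range, nsmul_eq_mul, ← ENNReal.ofReal_natCast,
            ← ENNReal.ofReal_mul (by positivity)]
          ring_nf
  rw [← natCast_ceil_eq_intCast_ceil (div_pos hT hS).le]
  have hlim : Continuous fun a : ℝ => ENNReal.ofReal (2 * N * Real.exp (-(a ^ 2) / (18 * S))) :=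
    ENNReal.continuous_ofReal.comp (by fun_prop)
  exact ge_of_tendsto (hlim.tendsto A |>.mono_left nhdsWithin_le_nhds)
    (eventually_of_mem (Ioo_mem_nhdsLT hA) hbound)

/-- (Oscillations of Brownian motion.) If `B` is a standard real
Brownian motion, then for all `S, T, A > 0`:
`ℙ( sup{|B(t) − B(s)| : 0 ≤ s,t ≤ T, |t−s| ≤ S} ≥ A ) ≤ 2 ⌈T/S⌉ exp(−A²/(18S))`. -/
theorem stmt13
    {Ω : Type*} [MeasurableSpace Ω] (P : Measure Ω) [IsProbabilityMeasure P]
    (B : ℝ → Ω → ℝ)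
    (hmeas : ∀ t : ℝ, Measurable (B t))
    (hcont : ∀ ω, ContinuousOn (fun t => B t ω) (Ici (0 : ℝ)))
    (h0 : ∀ᵐ ω ∂P, B 0 ω = 0)
    (hindep : ∀ s t : ℝ, 0 ≤ s → s ≤ t →
      Indep (⨆ r ∈ Icc (0 : ℝ) s, MeasurableSpace.comap (B r) inferInstance)
        (MeasurableSpace.comap (fun ω => B t ω - B s ω) inferInstance) P)
    (hdist : ∀ s t : ℝ, 0 ≤ s → s ≤ t →
      Measure.map (fun ω => B t ω - B s ω) P = gaussianReal 0 (Real.toNNReal (t - s))) :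
    ∀ S T A : ℝ, 0 < S → 0 < T → 0 < A →
      P {ω | ENNReal.ofReal A ≤
          ⨆ s ∈ Icc (0 : ℝ) T, ⨆ t ∈ Icc (0 : ℝ) T, ⨆ (_ : |t - s| ≤ S),
            ENNReal.ofReal |B t ω - B s ω|}
        ≤ ENNReal.ofReal (2 * (⌈T / S⌉ : ℝ) * Real.exp (-(A ^ 2) / (18 * S))) :=
  stmt13_general P B hmeas hcont hindep hdist
end

section
/- Let E₁ and E₂ be complete separable metric spaces (equipped with their Borel σ-algebras), let μ be a probability measure on E₁ × E₂, and let μ₁ denote the first marginal of μ. Then there exists a measurable function G : E₁ × (0,1) → E₂ such that if X₁ and V are independent random variables with X₁ ∼ μ₁ and V uniformly distributed on (0,1), then the pair (X₁, G(X₁, V)) has distribution μ; equivalently, the pushforward of the product measure μ₁ ⊗ Unif(0,1) under the map (x, v) ↦ (x, G(x, v)) equals μ. -/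
/-!
Disintegrate `μ = μ₁ ⊗ₘ κ` along its first marginal, with `κ` the conditional kernel (which
exists because `E₂` is standard Borel). A Markov kernel into a standard Borel space is the image of
Lebesgue measure on `[0,1]` under a jointly measurable map `f` (Kallenberg, Lemma 4.22), and
`G (x, v) := f x (projIcc 0 1 v)` transports this to the uniform law on `(0,1)`, since `projIcc` is
the identity on `(0,1)`.
-/

open Set MeasureTheory ProbabilityTheory unitInterval

theorem measurable_projIcc {α : Type*} [LinearOrder α] [TopologicalSpace α] [OrderTopology α]
    [MeasurableSpace α] [BorelSpace α] {a b : α} (h : a ≤ b) : Measurable (projIcc a b h) :=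
  continuous_projIcc.measurable

theorem unitInterval.map_projIcc_volume_restrict_Ioo :
    (volume.restrict (Ioo (0 : ℝ) 1)).map (projIcc 0 1 zero_le_one) = (volume : Measure I) := by
  rw [Measure.restrict_congr_set Ioo_ae_eq_Icc, ← measurePreserving_coe.map_eq,
    Measure.map_map (measurable_projIcc zero_le_one) measurable_subtype_coe]
  have hid : (projIcc (0 : ℝ) 1 zero_le_one ∘ Subtype.val : I → I) = id :=
    funext (projIcc_val zero_le_one)
  rw [hid, Measure.map_id]

theorem MeasureTheory.Measure.map_prod_eq_compProd {α β γ : Type*} [MeasurableSpace α]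
    [MeasurableSpace β] [MeasurableSpace γ] {μ : Measure α} {ν : Measure γ} [SFinite μ]
    [SFinite ν] {κ : Kernel α β} [IsSFiniteKernel κ] {g : α → γ → β}
    (hg : Measurable (Function.uncurry g)) (hκ : ∀ᵐ a ∂μ, ν.map (g a) = κ a) :
    (μ.prod ν).map (fun p => (p.1, g p.1 p.2)) = μ ⊗ₘ κ := by
  have hmeas : Measurable fun p : α × γ => (p.1, g p.1 p.2) := measurable_fst.prodMk hg
  ext s hs
  rw [Measure.map_apply hmeas hs, Measure.prod_apply (hmeas hs), Measure.compProd_apply hs]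
  refine lintegral_congr_ae ?_
  filter_upwards [hκ] with a ha
  rw [← ha, Measure.map_apply hg.of_uncurry_left (measurable_prodMk_left hs)]
  rfl

theorem stmt14_general
    {E₁ E₂ : Type*}
    [MeasurableSpace E₁]
    [MetricSpace E₂] [CompleteSpace E₂] [TopologicalSpace.SeparableSpace E₂]
    [MeasurableSpace E₂] [BorelSpace E₂]
    (μ : Measure (E₁ × E₂)) [IsProbabilityMeasure μ] :
    ∃ G : E₁ × ℝ → E₂, Measurable G ∧
      Measure.map (fun p : E₁ × ℝ => (p.1, G p))
        ((μ.map Prod.fst).prod (volume.restrict (Ioo (0 : ℝ) 1))) = μ := by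
  have : Nonempty E₂ := nonempty_of_isProbabilityMeasure μ.snd
  obtain ⟨f, hf, hfκ⟩ := μ.condKernel.exists_measurable_map_eq_unitInterval
  let g : E₁ → ℝ → E₂ := fun x v => f x (projIcc 0 1 zero_le_one v)
  have hg : Measurable (Function.uncurry g) :=
    hf.comp (measurable_fst.prodMk ((measurable_projIcc zero_le_one).comp measurable_snd))
  refine ⟨Function.uncurry g, hg, ?_⟩
  have hgκ : ∀ x, (volume.restrict (Ioo (0 : ℝ) 1)).map (g x) = μ.condKernel x := fun x => by
    rw [← hfκ x, ← map_projIcc_volume_restrict_Ioo,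
      Measure.map_map hf.of_uncurry_left (measurable_projIcc zero_le_one)]
    rfl
  exact (Measure.map_prod_eq_compProd hg (.of_forall hgκ)).trans (μ.disintegrate μ.condKernel)

/-- (Coupling lemma.) Let `E₁, E₂` be complete separable metric spaces
with their Borel σ-algebras, `μ` a probability measure on `E₁ × E₂`, and `μ₁` its first
marginal. There exists a measurable `G : E₁ × (0,1) → E₂` such that the pushforward of
`μ₁ ⊗ Unif(0,1)` under `(x,v) ↦ (x, G(x,v))` equals `μ`. -/
theorem stmt14
    {E₁ E₂ : Type*}
    [MetricSpace E₁] [CompleteSpace E₁] [TopologicalSpace.SeparableSpace E₁]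
    [MeasurableSpace E₁] [BorelSpace E₁]
    [MetricSpace E₂] [CompleteSpace E₂] [TopologicalSpace.SeparableSpace E₂]
    [MeasurableSpace E₂] [BorelSpace E₂]
    (μ : Measure (E₁ × E₂)) [IsProbabilityMeasure μ] :
    ∃ G : E₁ × ℝ → E₂, Measurable G ∧
      Measure.map (fun p : E₁ × ℝ => (p.1, G p))
        ((μ.map Prod.fst).prod (volume.restrict (Ioo (0 : ℝ) 1))) = μ :=
  stmt14_general μ
end

section
/- Fix δ > 0 and define T : 𝒰* → [0,∞] by T(x) = inf{ t ≥ 0 : ‖φ_x(t) − x*‖ < δ }. Then T(x) < ∞ for every x ∈ 𝒰*, the function T is upper semicontinuous on 𝒰*, and consequently T is bounded from above on every compact subset of 𝒰*. -/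
/-!
Since the trajectory of `x` is compact, `F` is Lipschitz with some constant `L` on a tube of
radius `ε` around its piece over `[0, t₀]`. Grönwall's inequality, together with a first-exit
argument keeping nearby solutions inside the tube, shows `‖φ_y t₀ - φ_x t₀‖ ≤ ‖y - x‖ e^{L t₀}`,
so the time-`t₀` map is continuous. A hitting time of an open set is an infimum of times at which
an open condition holds, hence upper semicontinuous; it is finite because trajectories converge
to `x*`, and an upper semicontinuous function attains its maximum on a compact set.
-/

open Set Filter Metric Topology
open scoped NNReal ENNReal

section ODE

variable {E : Type*} [NormedAddCommGroup E] [NormedSpace ℝ E]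

theorem ContDiffOn.locallyLipschitzOn_of_isOpen {F : E → E} {U : Set E} (hU : IsOpen U)
    (hF : ContDiffOn ℝ 1 F U) : LocallyLipschitzOn U F := fun x hx => by
  obtain ⟨L, t, ht, hL⟩ := (hF.contDiffAt (hU.mem_nhds hx)).exists_lipschitzOnWith
  exact ⟨L, t, nhdsWithin_le_nhds ht, hL⟩

theorem dist_le_of_trajectories_of_lipschitzOnWith_thickening {F : E → E} {γ η : ℝ → E}
    {a b ε : ℝ} {L : ℝ≥0} (hF : LipschitzOnWith L F (thickening ε (γ '' Icc a b)))
    (hγ : ∀ t ∈ Icc a b, HasDerivAt γ (F (γ t)) t)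
    (hη : ∀ t ∈ Icc a b, HasDerivAt η (F (η t)) t)
    (hclose : dist (η a) (γ a) * Real.exp (L * (b - a)) < ε) :
    ∀ t ∈ Icc a b, dist (η t) (γ t) ≤ dist (η a) (γ a) * Real.exp (L * (t - a)) := by
  have hε : 0 < ε := lt_of_le_of_lt (by positivity) hclose
  have gronwall : ∀ c ≤ b, (∀ t ∈ Ico a c, dist (η t) (γ t) < ε) →
      ∀ t ∈ Icc a c, dist (η t) (γ t) ≤ dist (η a) (γ a) * Real.exp (L * (t - a)) := by
    intro c hcb hnear
    have hsub : Icc a c ⊆ Icc a b := Icc_subset_Icc_right hcb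
    refine dist_le_of_trajectories_ODE_of_mem (v := fun _ => F)
      (s := fun _ => thickening ε (γ '' Icc a b)) (fun _ _ => hF)
      (fun t ht => (hη t (hsub ht)).continuousAt.continuousWithinAt)
      (fun t ht => (hη t (hsub (Ico_subset_Icc_self ht))).hasDerivWithinAt)
      (fun t ht => mem_thickening_iff.2 ⟨γ t, mem_image_of_mem γ (hsub (Ico_subset_Icc_self ht)),
        hnear t ht⟩)
      (fun t ht => (hγ t (hsub ht)).continuousAt.continuousWithinAt)
      (fun t ht => (hγ t (hsub (Ico_subset_Icc_self ht))).hasDerivWithinAt)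
      (fun t ht => self_subset_thickening hε _
        (mem_image_of_mem γ (hsub (Ico_subset_Icc_self ht))))
      le_rfl
  suffices hnear : ∀ t ∈ Icc a b, dist (η t) (γ t) < ε from
    gronwall b le_rfl fun t ht => hnear t (Ico_subset_Icc_self ht)
  by_contra! hfar
  -- the first time the distance reaches `ε` still satisfies the Grönwall bound, which is `< ε`
  set S := Icc a b ∩ {t | ε ≤ dist (η t) (γ t)}
  have hS : IsClosed S := by
    have hcont : ContinuousOn (fun t => dist (η t) (γ t)) (Icc a b) := fun t ht =>
      ContinuousAt.continuousWithinAt ((hη t ht).continuousAt.dist (hγ t ht).continuousAt)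
    exact hcont.preimage_isClosed_of_isClosed isClosed_Icc isClosed_Ici
  have hSne : S.Nonempty := let ⟨t, ht, hfar⟩ := hfar; ⟨t, ht, hfar⟩
  have hτ : sInf S ∈ S := hS.csInf_mem hSne ⟨a, fun t ht => ht.1.1⟩
  have hbefore : ∀ t ∈ Ico a (sInf S), dist (η t) (γ t) < ε := fun t ht => by
    by_contra! h
    have htS : t ∈ S := ⟨⟨ht.1, ht.2.le.trans hτ.1.2⟩, h⟩
    exact (csInf_le ⟨a, fun s hs => hs.1.1⟩ htS).not_gt ht.2
  exact lt_irrefl ε <| calc ε ≤ dist (η (sInf S)) (γ (sInf S)) := hτ.2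
    _ ≤ dist (η a) (γ a) * Real.exp (L * (sInf S - a)) :=
        gronwall _ hτ.1.2 hbefore _ ⟨hτ.1.1, le_rfl⟩
    _ ≤ dist (η a) (γ a) * Real.exp (L * (b - a)) := by gcongr; exact hτ.1.2
    _ < ε := hclose

theorem continuousWithinAt_flow_of_locallyLipschitzOn [ProperSpace E] {F : E → E} {U S : Set E}
    (hU : IsOpen U) (hF : LocallyLipschitzOn U F) {φ : E → ℝ → E}
    (hφ0 : ∀ x ∈ S, φ x 0 = x) (hφmem : ∀ x ∈ S, ∀ t ≥ (0 : ℝ), φ x t ∈ U)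
    (hφode : ∀ x ∈ S, ∀ t ≥ (0 : ℝ), HasDerivAt (φ x) (F (φ x t)) t)
    {x : E} (hx : x ∈ S) {t₀ : ℝ} (ht₀ : 0 ≤ t₀) :
    ContinuousWithinAt (fun y => φ y t₀) S x := by
  have horbit : IsCompact (φ x '' Icc 0 t₀) := isCompact_Icc.image_of_continuousOn
    fun t ht => (hφode x hx t ht.1).continuousAt.continuousWithinAt
  obtain ⟨ε, hε, hεU⟩ := horbit.exists_cthickening_subset_open hU
    (image_subset_iff.2 fun t ht => hφmem x hx t ht.1)
  obtain ⟨L, hL⟩ := (hF.mono hεU).exists_lipschitzOnWith_of_compact horbit.cthickening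
  have hLip : LipschitzOnWith L F (thickening ε (φ x '' Icc 0 t₀)) :=
    hL.mono (thickening_subset_cthickening _ _)
  rw [Metric.continuousWithinAt_iff]
  intro η hη
  refine ⟨min ε η / Real.exp (L * t₀), by positivity, fun y hy hyx => ?_⟩
  have hclose : dist y x * Real.exp (L * t₀) < min ε η := by
    rwa [lt_div_iff₀ (Real.exp_pos _)] at hyx
  have hbound := dist_le_of_trajectories_of_lipschitzOnWith_thickening hLip
    (fun t ht => hφode x hx t ht.1) (fun t ht => hφode y hy t ht.1)
    (by simpa only [hφ0 x hx, hφ0 y hy, sub_zero] using hclose.trans_le (min_le_left _ _))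
    t₀ ⟨ht₀, le_rfl⟩
  rw [hφ0 x hx, hφ0 y hy, sub_zero] at hbound
  exact hbound.trans_lt (hclose.trans_le (min_le_right _ _))

end ODE

section HittingTime

variable {X : Type*}

noncomputable def hittingTime (γ : ℝ → X) (V : Set X) : ℝ≥0∞ :=
  ⨅ (t : ℝ) (_ : 0 ≤ t ∧ γ t ∈ V), ENNReal.ofReal t

theorem hittingTime_le {γ : ℝ → X} {V : Set X} {t : ℝ} (ht : 0 ≤ t) (hγt : γ t ∈ V) :
    hittingTime γ V ≤ ENNReal.ofReal t :=
  iInf₂_le t ⟨ht, hγt⟩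

theorem exists_of_hittingTime_lt {γ : ℝ → X} {V : Set X} {c : ℝ≥0∞}
    (hc : hittingTime γ V < c) : ∃ t, 0 ≤ t ∧ γ t ∈ V ∧ ENNReal.ofReal t < c := by
  obtain ⟨t, ht⟩ := iInf_lt_iff.1 hc
  obtain ⟨⟨ht0, hγt⟩, htc⟩ := iInf_lt_iff.1 ht
  exact ⟨t, ht0, hγt, htc⟩

theorem hittingTime_lt_top_of_tendsto [TopologicalSpace X] {γ : ℝ → X} {V : Set X} {p : X}
    (hγ : Tendsto γ atTop (𝓝 p)) (hV : V ∈ 𝓝 p) : hittingTime γ V < ⊤ := by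
  obtain ⟨t, ht0, hγt⟩ := ((eventually_ge_atTop 0).and (hγ hV)).exists
  exact (hittingTime_le ht0 hγt).trans_lt ENNReal.ofReal_lt_top

theorem upperSemicontinuousOn_hittingTime [TopologicalSpace X] {φ : X → ℝ → X} {S V : Set X}
    (hV : IsOpen V) (hφ : ∀ x ∈ S, ∀ t ≥ (0 : ℝ), ContinuousWithinAt (fun y => φ y t) S x) :
    UpperSemicontinuousOn (fun x => hittingTime (φ x) V) S := by
  intro x hx c hc
  obtain ⟨t, ht0, hφt, htc⟩ := exists_of_hittingTime_lt hc
  filter_upwards [hφ x hx t ht0 (hV.mem_nhds hφt)] with y hy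
  exact (hittingTime_le ht0 hy).trans_lt htc

end HittingTime

theorem UpperSemicontinuousOn.exists_forall_le_ofReal_of_isCompact {X : Type*}
    [TopologicalSpace X] {f : X → ℝ≥0∞} {S D : Set X} (hf : UpperSemicontinuousOn f S)
    (hfin : ∀ x ∈ S, f x < ⊤) (hDS : D ⊆ S) (hD : IsCompact D) :
    ∃ M : ℝ, ∀ x ∈ D, f x ≤ ENNReal.ofReal M := by
  rcases D.eq_empty_or_nonempty with rfl | hne
  · exact ⟨0, fun x hx => hx.elim⟩
  obtain ⟨x₀, hx₀, hmax⟩ := (hf.mono hDS).exists_isMaxOn hne hD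
  refine ⟨(f x₀).toReal, fun x hx => ?_⟩
  rw [ENNReal.ofReal_toReal (hfin x₀ (hDS hx₀)).ne]
  exact hmax hx

theorem stmt17_general
    (d : ℕ)
    (U : Set (EuclideanSpace ℝ (Fin d))) (hU : IsOpen U)
    (F : EuclideanSpace ℝ (Fin d) → EuclideanSpace ℝ (Fin d))
    (hF : ContDiffOn ℝ 1 F U)
    (xstar : EuclideanSpace ℝ (Fin d))
    (Ustar : Set (EuclideanSpace ℝ (Fin d)))
    (φ : EuclideanSpace ℝ (Fin d) → ℝ → EuclideanSpace ℝ (Fin d))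
    (hφ0 : ∀ x ∈ Ustar, φ x 0 = x)
    (hφmem : ∀ x ∈ Ustar, ∀ t ≥ (0 : ℝ), φ x t ∈ U)
    (hφode : ∀ x ∈ Ustar, ∀ t ≥ (0 : ℝ), HasDerivAt (φ x) (F (φ x t)) t)
    (hφlim : ∀ x ∈ Ustar, Tendsto (φ x) atTop (nhds xstar))
    (δ : ℝ) (hδ : 0 < δ)
    (T : EuclideanSpace ℝ (Fin d) → ENNReal)
    (hT : ∀ x, T x = ⨅ (t : ℝ) (_ : 0 ≤ t ∧ ‖φ x t - xstar‖ < δ), ENNReal.ofReal t) :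
    (∀ x ∈ Ustar, T x < ⊤) ∧
    UpperSemicontinuousOn T Ustar ∧
    (∀ D : Set (EuclideanSpace ℝ (Fin d)), D ⊆ Ustar → IsCompact D →
      ∃ M : ℝ, ∀ x ∈ D, T x ≤ ENNReal.ofReal M) := by
  have hT' : T = fun x => hittingTime (φ x) (ball xstar δ) := by
    funext x
    simp only [hT, hittingTime, mem_ball_iff_norm]
  have hfin : ∀ x ∈ Ustar, T x < ⊤ := fun x hx => by
    rw [hT']
    exact hittingTime_lt_top_of_tendsto (hφlim x hx) (ball_mem_nhds xstar hδ)
  have husc : UpperSemicontinuousOn T Ustar := hT' ▸ upperSemicontinuousOn_hittingTime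
    isOpen_ball fun x hx t ht => continuousWithinAt_flow_of_locallyLipschitzOn hU
      (hF.locallyLipschitzOn_of_isOpen hU) hφ0 hφmem hφode hx ht
  exact ⟨hfin, husc, fun D hDU hD => husc.exists_forall_le_ofReal_of_isCompact hfin hDU hD⟩

/-- Fix `δ > 0` and define `T : 𝒰* → [0,∞]` by
`T(x) = inf{t ≥ 0 : ‖φ_x(t) − x*‖ < δ}`. Then `T(x) < ∞` on `𝒰*`, `T` is upper
semicontinuous on `𝒰*`, and `T` is bounded above on every compact subset of `𝒰*`. -/
theorem stmt17
    (d : ℕ) (hd : 1 ≤ d)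
    (U : Set (EuclideanSpace ℝ (Fin d))) (hU : IsOpen U)
    (F : EuclideanSpace ℝ (Fin d) → EuclideanSpace ℝ (Fin d))
    (J : EuclideanSpace ℝ (Fin d) → Matrix (Fin d) (Fin d) ℝ)
    (hF : ContDiffOn ℝ 1 F U)
    (hJ : ∀ x ∈ U, HasFDerivAt F (Matrix.toEuclideanCLM (𝕜 := ℝ) (J x)) x)
    (hJlip : ∀ x ∈ U, ∃ ε > (0 : ℝ), ∃ L : ℝ,
      ∀ y ∈ Metric.ball x ε ∩ U, ∀ z ∈ Metric.ball x ε ∩ U,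
        ‖Matrix.toEuclideanCLM (𝕜 := ℝ) (J y) - Matrix.toEuclideanCLM (𝕜 := ℝ) (J z)‖
          ≤ L * ‖y - z‖)
    (xstar : EuclideanSpace ℝ (Fin d)) (hxU : xstar ∈ U) (hFx : F xstar = 0)
    (heig : ∀ μ : ℂ, (((J xstar).map (algebraMap ℝ ℂ)).charpoly).IsRoot μ → μ.re < 0)
    (ρstar : ℝ)
    (hρmem : ∃ μ : ℂ, (((J xstar).map (algebraMap ℝ ℂ)).charpoly).IsRoot μ ∧ ρstar = -μ.re)
    (hρmin : ∀ μ : ℂ, (((J xstar).map (algebraMap ℝ ℂ)).charpoly).IsRoot μ → ρstar ≤ -μ.re)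
    (Ustar : Set (EuclideanSpace ℝ (Fin d))) (hUstarU : Ustar ⊆ U)
    (φ : EuclideanSpace ℝ (Fin d) → ℝ → EuclideanSpace ℝ (Fin d))
    (hφ0 : ∀ x ∈ Ustar, φ x 0 = x)
    (hφmem : ∀ x ∈ Ustar, ∀ t ≥ (0 : ℝ), φ x t ∈ U)
    (hφode : ∀ x ∈ Ustar, ∀ t ≥ (0 : ℝ), HasDerivAt (φ x) (F (φ x t)) t)
    (hφlim : ∀ x ∈ Ustar, Tendsto (φ x) atTop (nhds xstar))
    (δ : ℝ) (hδ : 0 < δ)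
    (T : EuclideanSpace ℝ (Fin d) → ENNReal)
    (hT : ∀ x, T x = ⨅ (t : ℝ) (_ : 0 ≤ t ∧ ‖φ x t - xstar‖ < δ), ENNReal.ofReal t) :
    (∀ x ∈ Ustar, T x < ⊤) ∧
    UpperSemicontinuousOn T Ustar ∧
    (∀ D : Set (EuclideanSpace ℝ (Fin d)), D ⊆ Ustar → IsCompact D →
      ∃ M : ℝ, ∀ x ∈ D, T x ≤ ENNReal.ofReal M) :=
  stmt17_general d U hU F hF xstar Ustar φ hφ0 hφmem hφode hφlim δ hδ T hT
end
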